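/- Let 𝓛 be an upward-closed collection of subsets of K (L ∈ 𝓛 and L ⊆ L' ⊆ K imply L' ∈ 𝓛) such that every support in 𝓛 is positively winning for player 2 in the original game. Suppose moreover that every support positively winning for player 2 in the 𝓛-game belongs to 𝓛. Then every support L ∉ 𝓛 is almost-surely winning for player 1 in the original game. -/

import Mathlib

open scoped Classical

noncomputable section

/-- A probability distribution on a finite type, given by a nonnegative
real-valued density summing to `1`. -/
structure FDist (X : Type*) [Fintype X] where
  f : X → ℝ
  nonneg : ∀ x, 0 ≤ f x
  sum_one : ∑ x, f x = 1

/-- The support of a distribution: the set of points with positive probability. -/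
def FDist.support {X : Type*} [Fintype X] (δ : FDist X) : Finset X :=
  Finset.univ.filter fun x => 0 < δ.f x

/-- The uniform distribution on a nonempty finite set. -/
def uniform {X : Type*} [Fintype X] (L : Finset X) (hL : L.Nonempty) : FDist X where
  f x := if x ∈ L then (L.card : ℝ)⁻¹ else 0
  nonneg x := by split_ifs <;> positivity
  sum_one := by
    rw [Finset.sum_ite_mem, Finset.univ_inter, Finset.sum_const, nsmul_eq_mul,
      mul_inv_cancel₀]
    exact_mod_cast (Finset.card_pos.mpr hL).ne'

/-- Uniform distribution on `L`, defaulting to the uniform distribution on the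
whole type when `L` is empty. -/
def uniformD {X : Type*} [Fintype X] [Nonempty X] (L : Finset X) : FDist X :=
  if h : L.Nonempty then uniform L h else uniform Finset.univ Finset.univ_nonempty

/-- The Dirac distribution on a point. -/
def dirac {X : Type*} [Fintype X] (x : X) : FDist X where
  f y := if y = x then 1 else 0
  nonneg y := by by_cases h : y = x <;> simp [h]
  sum_one := by simp

/-- A stochastic game with partial observation on both sides and a reachability
objective for player 1: states `K`, actions `I`, `J`, signals `C`, `D`, target
states `T`, transition probabilities `p`, and actions encoded in signals via
`act₁`, `act₂`. -/
structure Game (K I J C D : Type*) [Fintype K] [Fintype I] [Fintype J] [Fintype C] [Fintype D] where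
  T : Finset K
  p : K → I → J → C × D × K → ℝ
  p_nonneg : ∀ k i j x, 0 ≤ p k i j x
  p_sum : ∀ k i j, ∑ x : C × D × K, p k i j x = 1
  act₁ : C → I
  act₂ : D → J
  act_compat : ∀ k i j c d l, 0 < p k i j (c, d, l) → i = act₁ c ∧ j = act₂ d

/-- A (behavioral) strategy of player 1: a distribution on actions for each
finite sequence of received signals. -/
abbrev Strategy1 (I C : Type*) [Fintype I] : Type _ := List C → FDist I

/-- A (behavioral) strategy of player 2. -/
abbrev Strategy2 (J D : Type*) [Fintype J] : Type _ := List D → FDist J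

/-- A play with `n+1` states: the initial state followed by `n` steps, each
consisting of a signal for player 1, a signal for player 2 and the next state. -/
structure Hist (K C D : Type*) (n : ℕ) where
  first : K
  steps : Fin n → C × D × K

instance (K C D : Type*) [Fintype K] [Fintype C] [Fintype D] (n : ℕ) :
    Fintype (Hist K C D n) :=
  Fintype.ofEquiv (K × (Fin n → C × D × K))
    { toFun := fun x => ⟨x.1, x.2⟩
      invFun := fun h => (h.first, h.steps)
      left_inv := fun _ => rfl
      right_inv := fun _ => rfl }

namespace Hist

variable {K C D : Type*}

/-- The last state of a play. -/
def last : ∀ {n : ℕ}, Hist K C D n → K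
  | 0, h => h.first
  | n + 1, h => (h.steps (Fin.last n)).2.2

/-- The play obtained by removing the last step. -/
def init {n : ℕ} (h : Hist K C D (n + 1)) : Hist K C D n :=
  ⟨h.first, fun m => h.steps m.castSucc⟩

/-- The `m`-th state of a play, `0`-indexed: `state h 0` is the initial state
(called `k₁` in `1`-indexed notation). -/
def state {n : ℕ} (h : Hist K C D n) (m : Fin (n + 1)) : K :=
  if hm : m.val = 0 then h.first
  else (h.steps ⟨m.val - 1, by have := m.isLt; omega⟩).2.2

/-- The sequence of signals received by player 1 along the play. -/
def sig1 {n : ℕ} (h : Hist K C D n) : List C := List.ofFn fun m => (h.steps m).1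

/-- The sequence of signals received by player 2 along the play. -/
def sig2 {n : ℕ} (h : Hist K C D n) : List D := List.ofFn fun m => (h.steps m).2.1

/-- The play visits the target set `T`. -/
def visits (T : Finset K) {n : ℕ} (h : Hist K C D n) : Prop :=
  ∃ m : Fin (n + 1), h.state m ∈ T

end Hist

namespace Game

variable {K I J C D : Type*} [Fintype K] [Fintype I] [Fintype J] [Fintype C] [Fintype D]

/-- The probability of a given play of `n` steps, under initial distribution `δ`
and strategies `σ`, `τ`. -/
def playProb (G : Game K I J C D) (δ : FDist K) (σ : Strategy1 I C) (τ : Strategy2 J D) :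
    ∀ n : ℕ, Hist K C D n → ℝ
  | 0, h => δ.f h.first
  | n + 1, h =>
      G.playProb δ σ τ n h.init *
        ∑ i : I, ∑ j : J,
          (σ h.init.sig1).f i * (τ h.init.sig2).f j *
            G.p h.init.last i j (h.steps (Fin.last n))

/-- The probability that a play with `n+1` states visits the target set. -/
def reachProb (G : Game K I J C D) (δ : FDist K) (σ : Strategy1 I C)
    (τ : Strategy2 J D) (n : ℕ) : ℝ :=
  ∑ h : Hist K C D n, if h.visits G.T then G.playProb δ σ τ n h else 0

/-- The reachability probability `γ₁(δ,σ,τ)`: the supremum over horizons of the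
probability that the play visits the target set. -/
def val (G : Game K I J C D) (δ : FDist K) (σ : Strategy1 I C) (τ : Strategy2 J D) : ℝ :=
  ⨆ n : ℕ, G.reachProb δ σ τ n

/-- `δ` is almost-surely winning for player 1. -/
def AlmostSureWin1 (G : Game K I J C D) (δ : FDist K) : Prop :=
  ∃ σ, ∀ τ, G.val δ σ τ = 1

/-- `δ` is positively winning for player 1. -/
def PositiveWin1 (G : Game K I J C D) (δ : FDist K) : Prop :=
  ∃ σ, ∀ τ, 0 < G.val δ σ τ

/-- `δ` is positively winning for player 2. -/
def PositiveWin2 (G : Game K I J C D) (δ : FDist K) : Prop :=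
  ∃ τ, ∀ σ, G.val δ σ τ < 1

/-- `δ` is surely (equivalently here, almost-surely) winning for player 2. -/
def SureWin2 (G : Game K I J C D) (δ : FDist K) : Prop :=
  ∃ τ, ∀ σ, G.val δ σ τ = 0

/-- One-step belief operator of player 1. -/
def B1 (G : Game K I J C D) (L : Finset K) (c : C) : Finset K :=
  Finset.univ.filter fun k => ∃ l ∈ L, ∃ d : D, 0 < G.p l (G.act₁ c) (G.act₂ d) (c, d, k)

/-- One-step belief operator of player 2. -/
def B2 (G : Game K I J C D) (L : Finset K) (d : D) : Finset K :=
  Finset.univ.filter fun k => ∃ l ∈ L, ∃ c : C, 0 < G.p l (G.act₁ c) (G.act₂ d) (c, d, k)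

/-- Belief of player 1 after a sequence of signals. -/
def B1seq (G : Game K I J C D) (L : Finset K) (cs : List C) : Finset K := cs.foldl G.B1 L

/-- Belief of player 2 after a sequence of signals. -/
def B2seq (G : Game K I J C D) (L : Finset K) (ds : List D) : Finset K := ds.foldl G.B2 L

/-- One-step pessimistic belief operator of player 1. -/
def B1p (G : Game K I J C D) (L : Finset K) (c : C) : Finset K := G.B1 (L \ G.T) c

/-- One-step pessimistic belief operator of player 2. -/
def B2p (G : Game K I J C D) (L : Finset K) (d : D) : Finset K := G.B2 (L \ G.T) d

/-- Pessimistic belief of player 1 after a sequence of signals. -/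
def B1pseq (G : Game K I J C D) (L : Finset K) (cs : List C) : Finset K := cs.foldl G.B1p L

/-- Pessimistic belief of player 2 after a sequence of signals. -/
def B2pseq (G : Game K I J C D) (L : Finset K) (ds : List D) : Finset K := ds.foldl G.B2p L

/-- The operator `Φ` on collections of subsets of `K ∖ T`. -/
def Phi (G : Game K I J C D) (𝓛 : Set (Finset K)) : Set (Finset K) :=
  {L | L ∈ 𝓛 ∧ L ∩ G.T = ∅ ∧ ∃ j : J, ∀ d : D, G.act₂ d = j → G.B2 L d ∈ 𝓛}

theorem Phi_mono (G : Game K I J C D) : Monotone G.Phi := by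
  intro A B hAB L hL
  obtain ⟨h1, h2, j, hj⟩ := hL
  exact ⟨hAB h1, h2, j, fun d hd => hAB (hj d hd)⟩

/-- `𝓛_∞`, the greatest fixpoint of `Φ`. -/
def Linf (G : Game K I J C D) : Set (Finset K) :=
  OrderHom.gfp ⟨G.Phi, G.Phi_mono⟩

/-- The winning condition of the `𝓛`-game for player 1, on a play with initial
support `L`: some state `k_m` is a target state and all earlier pessimistic
beliefs of player 1 avoid `𝓛`. -/
def LWin (G : Game K I J C D) (𝓛 : Set (Finset K)) (L : Finset K) {n : ℕ}
    (h : Hist K C D n) : Prop :=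
  ∃ m : Fin (n + 1), h.state m ∈ G.T ∧
    ∀ r : ℕ, 1 ≤ r → r ≤ m.val → G.B1pseq L (h.sig1.take r) ∉ 𝓛

/-- The payoff `γ₁^𝓛(δ,σ,τ)` of player 1 in the `𝓛`-game, for an initial
distribution `δ` with support `L`. -/
def Lval (G : Game K I J C D) (𝓛 : Set (Finset K)) (L : Finset K) (δ : FDist K)
    (σ : Strategy1 I C) (τ : Strategy2 J D) : ℝ :=
  ⨆ n : ℕ, ∑ h : Hist K C D n, if G.LWin 𝓛 L h then G.playProb δ σ τ n h else 0

end Game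

/-- The uniformly random strategy `σ_R` of player 1. -/
def randomStrat (I C : Type*) [Fintype I] [Nonempty I] : Strategy1 I C :=
  fun _ => uniform Finset.univ Finset.univ_nonempty

/-!
Player 1 plays uniformly among the *safe* actions at his current pessimistic belief, those after
which no signal that can occur moves the belief into `𝓛`. A nonempty belief `M ∉ 𝓛` always has a
safe action: otherwise the uniformly random strategy of player 2 would drive the belief into `𝓛`
before the target with positive probability, making `M` positively winning for player 2 in the
`𝓛`-game. Hence the pessimistic belief stays outside `𝓛` as long as the target is not visited.

From any belief `M ∉ 𝓛` and any state `k ∈ M`, the safe strategy reaches the target with positive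
probability against every `τ`. Otherwise the even mixture of `τ` with the random strategy would be
positively winning for player 2 in the `𝓛`-game from `M`: the random part punishes every unsafe
action with positive probability, and against safe play `τ` wins every play starting at `k`.

Player 2's strategies form a compact space on which these reachability probabilities are
continuous, so there are `N` and `ρ > 0` such that, from every such pair `(M, k)` and against every
`τ`, the target is reached within `N` steps with probability at least `ρ`. Conditioning on the first
`m N` steps (the Markov property), the probability of avoiding the target for `m N` steps is at
most `(1 - ρ) ^ m`.
-/

theorem mul_pos_iff_of_nonneg {a b : ℝ} (ha : 0 ≤ a) (hb : 0 ≤ b) :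
    0 < a * b ↔ 0 < a ∧ 0 < b :=
  ⟨fun h => ⟨ha.lt_of_ne (by rintro rfl; simp at h), hb.lt_of_ne (by rintro rfl; simp at h)⟩,
    fun h => mul_pos h.1 h.2⟩

theorem sum_fun_fin_succ {X M : Type*} [Fintype X] [AddCommMonoid M] {N : ℕ}
    (F : (Fin (N + 1) → X) → M) :
    ∑ s, F s = ∑ s : Fin N → X, ∑ x, F (Fin.snoc s x) := by
  rw [← Fintype.sum_equiv (Fin.snocEquiv fun _ => X) (fun p => F (Fin.snoc p.2 p.1)) F
    fun _ => rfl, Fintype.sum_prod_type, Finset.sum_comm]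

theorem exists_pos_le_of_compactSpace {X : Type*} [TopologicalSpace X] [CompactSpace X]
    {f : ℕ → X → ℝ} (hcont : ∀ n, Continuous (f n)) (hmono : ∀ x, Monotone (f · x))
    (hpos : ∀ x, ∃ n, 0 < f n x) : ∃ N, ∃ ρ > 0, ∀ x, ρ ≤ f N x := by
  obtain ⟨t, ht⟩ := isCompact_univ.elim_finite_subcover (fun n => {x | 0 < f n x})
    (fun n => isOpen_lt continuous_const (hcont n)) fun x _ => Set.mem_iUnion.2 (hpos x)
  have hN : ∀ x, 0 < f (t.sup id) x := fun x => by
    obtain ⟨n, hn, hx⟩ := Set.mem_iUnion₂.1 (ht (Set.mem_univ x))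
    exact hx.trans_le (hmono x (Finset.le_sup (f := id) hn))
  rcases isEmpty_or_nonempty X with hX | hX
  · exact ⟨0, 1, one_pos, fun x => hX.elim x⟩
  obtain ⟨x₀, -, hx₀⟩ := isCompact_univ.exists_isMinOn Set.univ_nonempty (hcont _).continuousOn
  exact ⟨t.sup id, f _ x₀, hN x₀, fun x => hx₀ (Set.mem_univ x)⟩

namespace FDist

variable {X : Type*} [Fintype X]

theorem exists_pos (δ : FDist X) : ∃ x, 0 < δ.f x := by
  by_contra! h
  have := δ.sum_one ▸ Finset.sum_nonpos fun x _ => h x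
  linarith

theorem f_injective : Function.Injective (FDist.f : FDist X → X → ℝ) := by
  rintro ⟨f, _, _⟩ ⟨g, _, _⟩ rfl
  rfl

instance : TopologicalSpace (FDist X) := .induced FDist.f inferInstance

theorem isEmbedding_f : Topology.IsEmbedding (FDist.f : FDist X → X → ℝ) :=
  ⟨⟨rfl⟩, f_injective⟩

theorem continuous_f_apply (x : X) : Continuous fun δ : FDist X => δ.f x :=
  (continuous_apply x).comp isEmbedding_f.continuous

instance : CompactSpace (FDist X) where
  isCompact_univ := by
    rw [isEmbedding_f.isCompact_iff, Set.image_univ]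
    convert isCompact_stdSimplex ℝ X
    ext g
    exact ⟨fun ⟨δ, hδ⟩ => hδ ▸ ⟨δ.nonneg, δ.sum_one⟩, fun ⟨h₀, h₁⟩ => ⟨⟨g, h₀, h₁⟩, rfl⟩⟩

end FDist

theorem uniform_f_pos_iff {X : Type*} [Fintype X] {L : Finset X} (hL : L.Nonempty) (x : X) :
    0 < (uniform L hL).f x ↔ x ∈ L := by
  have : (0 : ℝ) < L.card := by exact_mod_cast hL.card_pos
  by_cases hx : x ∈ L <;> simp [uniform, hx, this]

theorem uniformD_f_pos_iff {X : Type*} [Fintype X] [Nonempty X] {L : Finset X}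
    (hL : L.Nonempty) (x : X) : 0 < (uniformD L).f x ↔ x ∈ L := by
  rw [uniformD, dif_pos hL, uniform_f_pos_iff]

theorem randomStrat_f_pos {I C : Type*} [Fintype I] [Nonempty I] (cs : List C) (i : I) :
    0 < (randomStrat I C cs).f i :=
  (uniform_f_pos_iff _ i).2 (Finset.mem_univ i)

theorem dirac_f_self {X : Type*} [Fintype X] (x : X) : (dirac x).f x = 1 := by simp [dirac]

theorem dirac_f_of_ne {X : Type*} [Fintype X] {x y : X} (h : y ≠ x) : (dirac x).f y = 0 := by
  simp [dirac, h]

section ActSeqProb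

variable {S A : Type*} [Fintype A] (act : S → A)

/-- The probability that the behavioural strategy `π` plays, along the signal sequence `ss`,
the actions recorded in those signals. -/
def actSeqProb : (List S → FDist A) → List S → ℝ
  | _, [] => 1
  | π, s :: ss => (π []).f (act s) * actSeqProb (fun ys => π (s :: ys)) ss

variable {act}

@[simp]
theorem actSeqProb_nil (π : List S → FDist A) : actSeqProb act π [] = 1 := rfl

theorem actSeqProb_append_singleton (π : List S → FDist A) (ss : List S) (s : S) :
    actSeqProb act π (ss ++ [s]) = actSeqProb act π ss * (π ss).f (act s) := by
  induction ss generalizing π with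
  | nil => simp [actSeqProb]
  | cons s' ss ih => simp only [List.cons_append, actSeqProb, ih, mul_assoc]

theorem actSeqProb_nonneg (π : List S → FDist A) (ss : List S) : 0 ≤ actSeqProb act π ss := by
  induction ss using List.reverseRecOn with
  | nil => simp
  | append_singleton ss s ih =>
    rw [actSeqProb_append_singleton]
    exact mul_nonneg ih ((π ss).nonneg _)

theorem actSeqProb_pos_append_singleton_iff {π : List S → FDist A} {ss : List S} {s : S} :
    0 < actSeqProb act π (ss ++ [s]) ↔ 0 < actSeqProb act π ss ∧ 0 < (π ss).f (act s) := by
  rw [actSeqProb_append_singleton]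
  exact mul_pos_iff_of_nonneg (actSeqProb_nonneg _ _) ((π ss).nonneg _)

theorem actSeqProb_pos_of_forall_pos {π : List S → FDist A} (hπ : ∀ ss a, 0 < (π ss).f a)
    (ss : List S) : 0 < actSeqProb act π ss := by
  induction ss using List.reverseRecOn with
  | nil => simp
  | append_singleton ss s ih => exact actSeqProb_pos_append_singleton_iff.2 ⟨ih, hπ _ _⟩

theorem actSeqProb_pos_of_support_subset {π π' : List S → FDist A}
    (h : ∀ ss, 0 < actSeqProb act π ss → ∀ a, 0 < (π ss).f a → 0 < (π' ss).f a)
    {ss : List S} (hss : 0 < actSeqProb act π ss) : 0 < actSeqProb act π' ss := by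
  induction ss using List.reverseRecOn with
  | nil => simp
  | append_singleton ss s ih =>
    obtain ⟨h₁, h₂⟩ := actSeqProb_pos_append_singleton_iff.1 hss
    exact actSeqProb_pos_append_singleton_iff.2 ⟨ih h₁, h _ h₁ _ h₂⟩

theorem continuous_actSeqProb [TopologicalSpace (FDist A)]
    (hf : ∀ a, Continuous fun μ : FDist A => μ.f a) (ss : List S) :
    Continuous fun π : List S → FDist A => actSeqProb act π ss := by
  induction ss with
  | nil => exact continuous_const
  | cons s ss ih =>
    exact ((hf _).comp (continuous_apply [])).mul
      (ih.comp (continuous_pi fun ys => continuous_apply (s :: ys)))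

variable (act) in
/-- The behavioural strategy that realises the even mixture of `π₁` and `π₂`: at each
sequence it mixes the two in proportion to their probabilities of having produced it. -/
def mixStrategy (π₁ π₂ : List S → FDist A) (ss : List S) : FDist A :=
  if hpos : 0 < actSeqProb act π₁ ss + actSeqProb act π₂ ss then
    { f := fun a => (actSeqProb act π₁ ss * (π₁ ss).f a + actSeqProb act π₂ ss * (π₂ ss).f a) /
        (actSeqProb act π₁ ss + actSeqProb act π₂ ss)
      nonneg := fun a => div_nonneg
        (add_nonneg (mul_nonneg (actSeqProb_nonneg _ _) ((π₁ ss).nonneg a))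
          (mul_nonneg (actSeqProb_nonneg _ _) ((π₂ ss).nonneg a))) hpos.le
      sum_one := by
        rw [← Finset.sum_div, Finset.sum_add_distrib, ← Finset.mul_sum, ← Finset.mul_sum,
          (π₁ ss).sum_one, (π₂ ss).sum_one, mul_one, mul_one, div_self hpos.ne'] }
  else π₁ ss

variable (act) in
theorem actSeqProb_mixStrategy (π₁ π₂ : List S → FDist A) (ss : List S) :
    actSeqProb act (mixStrategy act π₁ π₂) ss =
      (actSeqProb act π₁ ss + actSeqProb act π₂ ss) / 2 := by
  induction ss using List.reverseRecOn with
  | nil => norm_num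
  | append_singleton ss s ih =>
    simp only [actSeqProb_append_singleton, ih]
    by_cases hpos : 0 < actSeqProb act π₁ ss + actSeqProb act π₂ ss
    · simp only [mixStrategy, dif_pos hpos]
      field_simp
    · have h₁ := actSeqProb_nonneg (act := act) π₁ ss
      have h₂ := actSeqProb_nonneg (act := act) π₂ ss
      obtain ⟨e₁, e₂⟩ : actSeqProb act π₁ ss = 0 ∧ actSeqProb act π₂ ss = 0 := by
        constructor <;> linarith
      simp [e₁, e₂]

theorem mixStrategy_f_pos {π₂ : List S → FDist A} (hπ₂ : ∀ ss a, 0 < (π₂ ss).f a)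
    (π₁ : List S → FDist A) (ss : List S) (a : A) : 0 < (mixStrategy act π₁ π₂ ss).f a := by
  have h₂ : 0 < actSeqProb act π₂ ss := actSeqProb_pos_of_forall_pos hπ₂ ss
  have hpos : 0 < actSeqProb act π₁ ss + actSeqProb act π₂ ss := by
    linarith [actSeqProb_nonneg (act := act) π₁ ss]
  simp only [mixStrategy, dif_pos hpos]
  exact div_pos (add_pos_of_nonneg_of_pos
    (mul_nonneg (actSeqProb_nonneg _ _) ((π₁ ss).nonneg a)) (mul_pos h₂ (hπ₂ ss a))) hpos

end ActSeqProb

namespace Hist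

variable {K C D : Type*} {n : ℕ}

def snoc (h : Hist K C D n) (x : C × D × K) : Hist K C D (n + 1) :=
  ⟨h.first, Fin.snoc h.steps x⟩

def join {a : ℕ} (h : Hist K C D a) : ∀ {N : ℕ}, (Fin N → C × D × K) → Hist K C D (a + N)
  | 0, _ => h
  | N + 1, s => (h.join (Fin.init s)).snoc (s (Fin.last N))

theorem ext {h g : Hist K C D n} (hfirst : h.first = g.first) (hsteps : h.steps = g.steps) :
    h = g := by
  cases h; cases g; cases hfirst; cases hsteps; rfl

@[simp] theorem snoc_first (h : Hist K C D n) (x) : (h.snoc x).first = h.first := rfl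

@[simp] theorem init_snoc (h : Hist K C D n) (x) : (h.snoc x).init = h :=
  ext rfl (funext fun _ => Fin.snoc_castSucc (α := fun _ => C × D × K) _ _ _)

theorem snoc_init (h : Hist K C D (n + 1)) : h.init.snoc (h.steps (Fin.last n)) = h :=
  ext rfl (Fin.snoc_init_self h.steps)

theorem exists_eq_snoc (h : Hist K C D (n + 1)) :
    ∃ (g : Hist K C D n) (x : C × D × K), h = g.snoc x :=
  ⟨_, _, (snoc_init h).symm⟩

@[simp] theorem steps_snoc_last (h : Hist K C D n) (x) : (h.snoc x).steps (Fin.last n) = x :=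
  Fin.snoc_last (α := fun _ => C × D × K) _ _

@[simp] theorem last_snoc (h : Hist K C D n) (x) : (h.snoc x).last = x.2.2 := by
  simp [last]

@[simp] theorem sig1_snoc (h : Hist K C D n) (x) : (h.snoc x).sig1 = h.sig1 ++ [x.1] := by
  simp only [sig1, snoc, List.ofFn_succ', Fin.snoc_castSucc, Fin.snoc_last, List.concat_eq_append]

@[simp] theorem sig2_snoc (h : Hist K C D n) (x) : (h.snoc x).sig2 = h.sig2 ++ [x.2.1] := by
  simp only [sig2, snoc, List.ofFn_succ', Fin.snoc_castSucc, Fin.snoc_last, List.concat_eq_append]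

@[simp] theorem sig1_length (h : Hist K C D n) : h.sig1.length = n := by simp [sig1]

@[simp] theorem sig1_zero (h : Hist K C D 0) : h.sig1 = [] := by simp [sig1]

@[simp] theorem sig2_zero (h : Hist K C D 0) : h.sig2 = [] := by simp [sig2]

theorem state_last (h : Hist K C D n) : h.state (Fin.last n) = h.last := by
  cases n <;> rfl

theorem state_snoc_castSucc (h : Hist K C D n) (x) (m : Fin (n + 1)) :
    (h.snoc x).state m.castSucc = h.state m := by
  by_cases hm : (m : ℕ) = 0
  · simp [state, hm]
  · have hlt : (m : ℕ) - 1 < n := by omega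
    simp only [state, Fin.val_castSucc, hm, dite_false]
    exact congrArg (fun y : C × D × K => y.2.2)
      (Fin.snoc_castSucc (α := fun _ => C × D × K) (p := h.steps) (i := ⟨_, hlt⟩) x)

theorem visits_zero (T : Finset K) (h : Hist K C D 0) : h.visits T ↔ h.first ∈ T :=
  ⟨fun ⟨m, hm⟩ => by simpa [state, Fin.val_eq_zero m] using hm, fun hf => ⟨0, by simpa [state]⟩⟩

theorem visits_snoc (T : Finset K) (h : Hist K C D n) (x) :
    (h.snoc x).visits T ↔ h.visits T ∨ x.2.2 ∈ T := by
  constructor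
  · rintro ⟨m, hm⟩
    induction m using Fin.lastCases with
    | last => exact .inr (by rwa [state_last, last_snoc] at hm)
    | cast m => exact .inl ⟨m, by rwa [state_snoc_castSucc] at hm⟩
  · rintro (⟨m, hm⟩ | hx)
    · exact ⟨m.castSucc, by rwa [state_snoc_castSucc]⟩
    · exact ⟨Fin.last _, by rwa [state_last, last_snoc]⟩

theorem visits_of_last_mem {T : Finset K} {h : Hist K C D n}
    (hl : h.last ∈ T) : h.visits T :=
  ⟨Fin.last n, by rwa [state_last]⟩

theorem join_snoc {a N : ℕ} (h : Hist K C D a) (s : Fin N → C × D × K) (x) :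
    h.join (Fin.snoc s x) = (h.join s).snoc x := by
  simp [join]

def tail {a N : ℕ} (h : Hist K C D a) (s : Fin N → C × D × K) : Hist K C D N := ⟨h.last, s⟩

@[simp] theorem tail_snoc {a N : ℕ} (h : Hist K C D a) (s : Fin N → C × D × K) (x) :
    h.tail (Fin.snoc s x) = (h.tail s).snoc x := rfl

@[simp] theorem first_join {a : ℕ} (h : Hist K C D a) :
    ∀ {N : ℕ} (s : Fin N → C × D × K), (h.join s).first = h.first
  | 0, _ => rfl
  | _ + 1, s => first_join h (Fin.init s)

theorem last_join {a : ℕ} (h : Hist K C D a) :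
    ∀ {N : ℕ} (s : Fin N → C × D × K), (h.join s).last = (h.tail s).last
  | 0, _ => rfl
  | N + 1, s => by
    rw [← Fin.snoc_init_self s, join_snoc, tail_snoc, last_snoc, last_snoc]

theorem sig1_join {a : ℕ} (h : Hist K C D a) :
    ∀ {N : ℕ} (s : Fin N → C × D × K), (h.join s).sig1 = h.sig1 ++ (h.tail s).sig1
  | 0, _ => by simp [join, tail]
  | N + 1, s => by
    rw [← Fin.snoc_init_self s, join_snoc, tail_snoc, sig1_snoc, sig1_snoc, sig1_join,
      List.append_assoc]

theorem sig2_join {a : ℕ} (h : Hist K C D a) :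
    ∀ {N : ℕ} (s : Fin N → C × D × K), (h.join s).sig2 = h.sig2 ++ (h.tail s).sig2
  | 0, _ => by simp [join, tail]
  | N + 1, s => by
    rw [← Fin.snoc_init_self s, join_snoc, tail_snoc, sig2_snoc, sig2_snoc, sig2_join,
      List.append_assoc]

theorem visits_join (T : Finset K) {a : ℕ} (h : Hist K C D a) :
    ∀ {N : ℕ} (s : Fin N → C × D × K),
      (h.join s).visits T ↔ h.visits T ∨ (h.tail s).visits T
  | 0, s => by
    show h.visits T ↔ h.visits T ∨ (h.tail s).visits T
    rw [visits_zero]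
    exact ⟨.inl, fun hv => hv.elim id fun hl => ⟨Fin.last a, by rw [state_last]; exact hl⟩⟩
  | N + 1, s => by
    rw [← Fin.snoc_init_self s, join_snoc, tail_snoc, visits_snoc, visits_snoc, visits_join,
      or_assoc]

theorem state_join_castLE {a : ℕ} (h : Hist K C D a) :
    ∀ {N : ℕ} (s : Fin N → C × D × K) (m : Fin (a + 1)),
      (h.join s).state (m.castLE (by omega)) = h.state m
  | 0, _, _ => rfl
  | N + 1, s, m => by
    rw [← Fin.snoc_init_self s, join_snoc, ← state_join_castLE h (Fin.init s) m]
    exact state_snoc_castSucc (n := a + N) _ _ (m.castLE (by omega))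

variable [Fintype K] [Fintype C] [Fintype D] {M : Type*} [AddCommMonoid M]

theorem sum_eq_sum_first {n : ℕ} (F : Hist K C D n → M) :
    ∑ h, F h = ∑ k, ∑ s : Fin n → C × D × K, F ⟨k, s⟩ :=
  (Fintype.sum_equiv ⟨fun p => (⟨p.1, p.2⟩ : Hist K C D n), fun h => (h.first, h.steps),
    fun _ => rfl, fun _ => rfl⟩ _ _ fun _ => rfl).symm.trans (Fintype.sum_prod_type _)

theorem sum_snoc {n : ℕ} (F : Hist K C D (n + 1) → M) :
    ∑ h, F h = ∑ h : Hist K C D n, ∑ x, F (h.snoc x) := by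
  simp only [sum_eq_sum_first, sum_fun_fin_succ]
  rfl

theorem sum_join {a : ℕ} :
    ∀ {N : ℕ} (F : Hist K C D (a + N) → M),
      ∑ h, F h = ∑ h : Hist K C D a, ∑ s : Fin N → C × D × K, F (h.join s)
  | 0, F => by simp [join]
  | N + 1, F => by
    refine (sum_snoc (n := a + N) F).trans <| (sum_join fun h => ∑ x, F (h.snoc x)).trans ?_
    simp only [sum_fun_fin_succ, join_snoc]

end Hist

namespace Game

variable {K I J C D : Type*} [Fintype K] [Fintype I] [Fintype J] [Fintype C] [Fintype D]
  (G : Game K I J C D) {n : ℕ}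

theorem p_eq_zero_of_ne {k : K} {i : I} {j : J} {x : C × D × K}
    (h : i ≠ G.act₁ x.1 ∨ j ≠ G.act₂ x.2.1) : G.p k i j x = 0 :=
  ((G.p_nonneg k i j x).eq_of_not_lt fun hp => by
    have := G.act_compat k i j x.1 x.2.1 x.2.2 hp
    tauto).symm

theorem sum_sum_mul_p (α : I → ℝ) (β : J → ℝ) (k : K) (x : C × D × K) :
    ∑ i, ∑ j, α i * β j * G.p k i j x =
      α (G.act₁ x.1) * β (G.act₂ x.2.1) * G.p k (G.act₁ x.1) (G.act₂ x.2.1) x := by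
  rw [Finset.sum_eq_single (G.act₁ x.1), Finset.sum_eq_single (G.act₂ x.2.1)]
  · exact fun j _ hj => by rw [G.p_eq_zero_of_ne (.inr hj), mul_zero]
  · simp
  · exact fun i _ hi => Finset.sum_eq_zero fun j _ => by rw [G.p_eq_zero_of_ne (.inl hi), mul_zero]
  · simp

theorem sum_sum_sum_mul_p_eq_one (μ : FDist I) (ν : FDist J) (k : K) :
    ∑ x, ∑ i, ∑ j, μ.f i * ν.f j * G.p k i j x = 1 := by
  rw [Finset.sum_comm]
  simp_rw [Finset.sum_comm (γ := C × D × K), ← Finset.mul_sum, G.p_sum, mul_one, ← Finset.mul_sum,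
    ν.sum_one, mul_one, μ.sum_one]

def transProb : ∀ n : ℕ, Hist K C D n → ℝ
  | 0, _ => 1
  | n + 1, h =>
    transProb n h.init * G.p h.init.last (G.act₁ (h.steps (Fin.last n)).1)
      (G.act₂ (h.steps (Fin.last n)).2.1) (h.steps (Fin.last n))

theorem transProb_snoc (h : Hist K C D n) (x : C × D × K) :
    G.transProb (n + 1) (h.snoc x) =
      G.transProb n h * G.p h.last (G.act₁ x.1) (G.act₂ x.2.1) x := by
  simp [transProb]

theorem transProb_nonneg : ∀ {n : ℕ} (h : Hist K C D n), 0 ≤ G.transProb n h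
  | 0, _ => zero_le_one
  | _ + 1, _ => mul_nonneg (transProb_nonneg _) (G.p_nonneg _ _ _ _)

variable (δ : FDist K) (σ : Strategy1 I C) (τ : Strategy2 J D)

theorem playProb_snoc' (h : Hist K C D n) (x : C × D × K) :
    G.playProb δ σ τ (n + 1) (h.snoc x) =
      G.playProb δ σ τ n h * ∑ i, ∑ j, (σ h.sig1).f i * (τ h.sig2).f j * G.p h.last i j x := by
  simp [playProb]

theorem playProb_snoc (h : Hist K C D n) (x : C × D × K) :
    G.playProb δ σ τ (n + 1) (h.snoc x) = G.playProb δ σ τ n h *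
      ((σ h.sig1).f (G.act₁ x.1) * (τ h.sig2).f (G.act₂ x.2.1) *
        G.p h.last (G.act₁ x.1) (G.act₂ x.2.1) x) := by
  rw [playProb_snoc', sum_sum_mul_p]

theorem playProb_eq : ∀ {n : ℕ} (h : Hist K C D n),
    G.playProb δ σ τ n h = δ.f h.first * actSeqProb G.act₁ σ h.sig1 *
      actSeqProb G.act₂ τ h.sig2 * G.transProb n h
  | 0, h => by simp [playProb, transProb]
  | n + 1, h => by
    obtain ⟨g, x, rfl⟩ := h.exists_eq_snoc
    rw [playProb_snoc, playProb_eq, transProb_snoc, Hist.sig1_snoc, Hist.sig2_snoc,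
      actSeqProb_append_singleton, actSeqProb_append_singleton, Hist.snoc_first]
    ring

theorem playProb_nonneg (h : Hist K C D n) : 0 ≤ G.playProb δ σ τ n h := by
  rw [playProb_eq]
  have := actSeqProb_nonneg (act := G.act₁) σ h.sig1
  have := actSeqProb_nonneg (act := G.act₂) τ h.sig2
  have := G.transProb_nonneg h
  have := δ.nonneg h.first
  positivity

theorem playProb_pos_iff (h : Hist K C D n) :
    0 < G.playProb δ σ τ n h ↔ 0 < δ.f h.first ∧ 0 < actSeqProb G.act₁ σ h.sig1 ∧
      0 < actSeqProb G.act₂ τ h.sig2 ∧ 0 < G.transProb n h := by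
  have h₁ := actSeqProb_nonneg (act := G.act₁) σ h.sig1
  have h₂ := actSeqProb_nonneg (act := G.act₂) τ h.sig2
  have h₃ := G.transProb_nonneg h
  have h₀ := δ.nonneg h.first
  rw [playProb_eq, mul_pos_iff_of_nonneg (by positivity) h₃,
    mul_pos_iff_of_nonneg (by positivity) h₂, mul_pos_iff_of_nonneg h₀ h₁, and_assoc, and_assoc]

theorem sum_playProb_snoc (h : Hist K C D n) :
    ∑ x, G.playProb δ σ τ (n + 1) (h.snoc x) = G.playProb δ σ τ n h := by
  simp_rw [playProb_snoc', ← Finset.mul_sum, sum_sum_sum_mul_p_eq_one, mul_one]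

theorem sum_playProb : ∀ n : ℕ, ∑ h, G.playProb δ σ τ n h = 1
  | 0 => by simp [Hist.sum_eq_sum_first, playProb, δ.sum_one]
  | n + 1 => by simp_rw [Hist.sum_snoc, sum_playProb_snoc, sum_playProb n]

theorem sum_playProb_join {a : ℕ} (h : Hist K C D a) :
    ∀ {N : ℕ}, ∑ s : Fin N → C × D × K, G.playProb δ σ τ (a + N) (h.join s) =
      G.playProb δ σ τ a h
  | 0 => by simp [Hist.join]
  | N + 1 => by
    simp_rw [sum_fun_fin_succ, Hist.join_snoc]
    exact (Finset.sum_congr rfl fun s _ => G.sum_playProb_snoc δ σ τ _).trans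
      (sum_playProb_join h)

/-- The Markov property. -/
theorem playProb_join {a : ℕ} (h : Hist K C D a) :
    ∀ {N : ℕ} (s : Fin N → C × D × K),
      G.playProb δ σ τ (a + N) (h.join s) = G.playProb δ σ τ a h *
        G.playProb (dirac h.last) (fun cs => σ (h.sig1 ++ cs)) (fun ds => τ (h.sig2 ++ ds)) N
          (h.tail s)
  | 0, s => by simp [Hist.join, playProb, Hist.tail, dirac_f_self]
  | N + 1, s => by
    rw [← Fin.snoc_init_self s, Hist.join_snoc, Hist.tail_snoc]
    refine (G.playProb_snoc δ σ τ (n := a + N) _ _).trans ?_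
    rw [playProb_snoc, playProb_join, Hist.sig1_join, Hist.sig2_join, Hist.last_join, mul_assoc]

def eventProb (n : ℕ) (W : Hist K C D n → Prop) : ℝ :=
  ∑ h, if W h then G.playProb δ σ τ n h else 0

theorem ite_playProb_nonneg (P : Prop) [Decidable P] (h : Hist K C D n) :
    0 ≤ if P then G.playProb δ σ τ n h else 0 := by
  split_ifs
  exacts [G.playProb_nonneg δ σ τ h, le_rfl]

theorem eventProb_nonneg (W : Hist K C D n → Prop) : 0 ≤ G.eventProb δ σ τ n W :=
  Finset.sum_nonneg fun h _ => G.ite_playProb_nonneg δ σ τ _ h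

theorem eventProb_add_eventProb_not (W : Hist K C D n → Prop) :
    G.eventProb δ σ τ n W + G.eventProb δ σ τ n (¬ W ·) = 1 := by
  rw [eventProb, eventProb, ← Finset.sum_add_distrib, ← G.sum_playProb δ σ τ n]
  refine Finset.sum_congr rfl fun h _ => ?_
  by_cases hW : W h <;> simp [hW]

theorem eventProb_le_one (W : Hist K C D n → Prop) : G.eventProb δ σ τ n W ≤ 1 := by
  linarith [G.eventProb_add_eventProb_not δ σ τ W, G.eventProb_nonneg δ σ τ (n := n) (¬ W ·)]

theorem playProb_le_eventProb {W : Hist K C D n → Prop} {h : Hist K C D n} (hW : W h) :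
    G.playProb δ σ τ n h ≤ G.eventProb δ σ τ n W := by
  have hle := Finset.single_le_sum (s := Finset.univ)
    (f := fun h' => if W h' then G.playProb δ σ τ n h' else 0)
    (fun h' _ => G.ite_playProb_nonneg δ σ τ _ h') (Finset.mem_univ h)
  rw [if_pos hW] at hle
  exact hle

theorem eventProb_mono (W : ∀ n, Hist K C D n → Prop)
    (hW : ∀ n (h : Hist K C D n) x, W n h → W (n + 1) (h.snoc x)) :
    Monotone fun n => G.eventProb δ σ τ n (W n) := by
  refine monotone_nat_of_le_succ fun n => ?_
  simp only [eventProb, Hist.sum_snoc (n := n)]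
  refine Finset.sum_le_sum fun h _ => ?_
  split_ifs with hWh
  · rw [← G.sum_playProb_snoc δ σ τ h]
    exact (Finset.sum_congr rfl fun x _ => if_pos (hW n h x hWh)).ge
  · exact Finset.sum_nonneg fun x _ => G.ite_playProb_nonneg δ σ τ _ _

theorem eventProb_le_one_sub_of_join (W : ∀ n, Hist K C D n → Prop)
    (hW : ∀ n (h : Hist K C D n) x, W n h → W (n + 1) (h.snoc x)) {a : ℕ} (g : Hist K C D a)
    (hg : ∀ N (s : Fin N → C × D × K), W (a + N) (g.join s) →
      G.playProb δ σ τ (a + N) (g.join s) = 0) (n : ℕ) :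
    G.eventProb δ σ τ n (W n) ≤ 1 - G.playProb δ σ τ a g := by
  refine (G.eventProb_mono δ σ τ W hW (Nat.le_add_left n a)).trans ?_
  have hterm : ∀ h₁ : Hist K C D a,
      ∑ s : Fin n → C × D × K, (if W (a + n) (h₁.join s) then
        G.playProb δ σ τ (a + n) (h₁.join s) else 0) ≤
      G.playProb δ σ τ a h₁ - if h₁ = g then G.playProb δ σ τ a h₁ else 0 := by
    intro h₁
    split_ifs with hh₁
    · subst hh₁
      rw [sub_self]
      exact (Finset.sum_eq_zero fun s _ => by split_ifs with hs; exacts [hg n s hs, rfl]).le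
    · rw [sub_zero, ← G.sum_playProb_join δ σ τ h₁]
      exact Finset.sum_le_sum fun s _ => by
        split_ifs
        exacts [le_rfl, G.playProb_nonneg δ σ τ _]
  calc G.eventProb δ σ τ (a + n) (W (a + n))
      ≤ ∑ h₁, (G.playProb δ σ τ a h₁ - if h₁ = g then G.playProb δ σ τ a h₁ else 0) := by
        rw [eventProb, Hist.sum_join]
        exact Finset.sum_le_sum fun h₁ _ => hterm h₁
    _ = 1 - G.playProb δ σ τ a g := by
        rw [Finset.sum_sub_distrib, G.sum_playProb, Finset.sum_ite_eq' Finset.univ g,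
          if_pos (Finset.mem_univ g)]

theorem eventProb_mixStrategy (τ' : Strategy2 J D) (W : Hist K C D n → Prop) :
    G.eventProb δ σ (mixStrategy G.act₂ τ τ') n W =
      (G.eventProb δ σ τ n W + G.eventProb δ σ τ' n W) / 2 := by
  simp only [eventProb, ← Finset.sum_add_distrib, Finset.sum_div]
  refine Finset.sum_congr rfl fun h _ => ?_
  split_ifs
  · simp only [playProb_eq, actSeqProb_mixStrategy]
    ring
  · simp

theorem continuous_eventProb (W : Hist K C D n → Prop) :
    Continuous fun τ : Strategy2 J D => G.eventProb δ σ τ n W := by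
  refine continuous_finsetSum _ fun h _ => ?_
  split_ifs
  · simp only [playProb_eq]
    exact (continuous_const.mul
      (continuous_actSeqProb FDist.continuous_f_apply h.sig2)).mul continuous_const
  · exact continuous_const

theorem reachProb_mono : Monotone (G.reachProb δ σ τ) :=
  G.eventProb_mono δ σ τ (fun _ h => h.visits G.T) fun _ h x hv =>
    (h.visits_snoc G.T x).2 (.inl hv)

theorem reachProb_le_val : G.reachProb δ σ τ n ≤ G.val δ σ τ :=
  le_ciSup (f := G.reachProb δ σ τ) ⟨1, by
    rintro _ ⟨_, rfl⟩
    exact G.eventProb_le_one δ σ τ _⟩ n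

theorem val_le_one : G.val δ σ τ ≤ 1 :=
  ciSup_le fun _ => G.eventProb_le_one δ σ τ _

theorem eventProb_dirac (k : K)
    (W : Hist K C D n → Prop) :
    G.eventProb (dirac k) σ τ n W =
      ∑ s, if W ⟨k, s⟩ then G.playProb (dirac k) σ τ n ⟨k, s⟩ else 0 := by
  rw [eventProb, Hist.sum_eq_sum_first, Finset.sum_eq_single k]
  · intro k' _ hk'
    refine Finset.sum_eq_zero fun s _ => ?_
    rw [playProb_eq]
    simp [dirac_f_of_ne hk']
  · simp

theorem eventProb_not_visits_add_le {a N : ℕ} {ρ : ℝ}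
    (hρ : ∀ h : Hist K C D a, 0 < G.playProb δ σ τ a h → ¬ h.visits G.T →
      ρ ≤ G.reachProb (dirac h.last) (fun cs => σ (h.sig1 ++ cs)) (fun ds => τ (h.sig2 ++ ds)) N) :
    G.eventProb δ σ τ (a + N) (¬ ·.visits G.T) ≤
      (1 - ρ) * G.eventProb δ σ τ a (¬ ·.visits G.T) := by
  rw [eventProb, Hist.sum_join, eventProb, Finset.mul_sum]
  refine Finset.sum_le_sum fun h _ => ?_
  by_cases hv : h.visits G.T
  · simp [Hist.visits_join, hv]
  rcases (G.playProb_nonneg δ σ τ h).eq_or_lt with hp | hp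
  · simp [playProb_join, ← hp]
  have hterm : ∑ s : Fin N → C × D × K, (if ¬ (h.join s).visits G.T then
      G.playProb δ σ τ (a + N) (h.join s) else 0) = G.playProb δ σ τ a h *
      G.eventProb (dirac h.last) (fun cs => σ (h.sig1 ++ cs)) (fun ds => τ (h.sig2 ++ ds)) N
        (¬ ·.visits G.T) := by
    rw [eventProb_dirac, Finset.mul_sum]
    refine Finset.sum_congr rfl fun s _ => ?_
    rw [playProb_join]
    simp [Hist.visits_join, hv, Hist.tail]
  have hreach : ρ ≤ G.eventProb (dirac h.last) (fun cs => σ (h.sig1 ++ cs))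
      (fun ds => τ (h.sig2 ++ ds)) N (·.visits G.T) := hρ h hp hv
  have hsum := G.eventProb_add_eventProb_not (dirac h.last) (fun cs => σ (h.sig1 ++ cs))
    (fun ds => τ (h.sig2 ++ ds)) (n := N) (·.visits G.T)
  calc _ = G.playProb δ σ τ a h * G.eventProb (dirac h.last) (fun cs => σ (h.sig1 ++ cs))
          (fun ds => τ (h.sig2 ++ ds)) N (¬ ·.visits G.T) := by convert hterm
    _ ≤ G.playProb δ σ τ a h * (1 - ρ) :=
      mul_le_mul_of_nonneg_left (by linarith) hp.le
    _ = _ := by rw [if_pos hv, mul_comm]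

theorem val_eq_one_of_eventProb_not_visits_add_le {N : ℕ} {ρ : ℝ} (hρ : 0 < ρ) (hρ1 : ρ ≤ 1)
    (hstep : ∀ a, G.eventProb δ σ τ (a + N) (¬ ·.visits G.T) ≤
      (1 - ρ) * G.eventProb δ σ τ a (¬ ·.visits G.T)) :
    G.val δ σ τ = 1 := by
  have hdecay : ∀ m : ℕ, G.eventProb δ σ τ (m * N) (¬ ·.visits G.T) ≤ (1 - ρ) ^ m := by
    intro m
    induction m with
    | zero => simpa using G.eventProb_le_one δ σ τ _
    | succ m ih =>
      rw [Nat.succ_mul, pow_succ']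
      exact (hstep _).trans (mul_le_mul_of_nonneg_left ih (by linarith))
  have hlim : Filter.Tendsto (fun m : ℕ => 1 - (1 - ρ) ^ m) Filter.atTop (nhds 1) := by
    simpa using (tendsto_pow_atTop_nhds_zero_of_lt_one (r := 1 - ρ) (by linarith)
      (by linarith)).const_sub 1
  refine le_antisymm (G.val_le_one δ σ τ) (le_of_tendsto' hlim fun m => ?_)
  have hval : G.eventProb δ σ τ (m * N) (·.visits G.T) ≤ G.val δ σ τ := G.reachProb_le_val δ σ τ
  linarith [hdecay m, G.eventProb_add_eventProb_not δ σ τ (n := m * N) (·.visits G.T)]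

end Game

namespace Game

variable {K I J C D : Type*} [Fintype K] [Fintype I] [Fintype J] [Fintype C] [Fintype D]
  (G : Game K I J C D)

theorem B1pseq_append (L : Finset K) (cs cs' : List C) :
    G.B1pseq L (cs ++ cs') = G.B1pseq (G.B1pseq L cs) cs' :=
  List.foldl_append

theorem B1pseq_append_singleton (L : Finset K) (cs : List C) (c : C) :
    G.B1pseq L (cs ++ [c]) = G.B1p (G.B1pseq L cs) c :=
  G.B1pseq_append L cs [c]

theorem mem_B1p {L : Finset K} {c : C} {k : K} :
    k ∈ G.B1p L c ↔ ∃ l ∈ L, l ∉ G.T ∧ ∃ d, 0 < G.p l (G.act₁ c) (G.act₂ d) (c, d, k) := by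
  simp [B1p, B1, and_assoc]

theorem transProb_snoc_pos_iff {n : ℕ} {h : Hist K C D n} {x : C × D × K} :
    0 < G.transProb (n + 1) (h.snoc x) ↔
      0 < G.transProb n h ∧ 0 < G.p h.last (G.act₁ x.1) (G.act₂ x.2.1) x := by
  rw [transProb_snoc]
  exact mul_pos_iff_of_nonneg (G.transProb_nonneg h) (G.p_nonneg _ _ _ _)

theorem last_mem_B1pseq {L : Finset K} :
    ∀ {n : ℕ} {h : Hist K C D n}, h.first ∈ L → 0 < G.transProb n h → ¬ h.visits G.T →
      h.last ∈ G.B1pseq L h.sig1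
  | 0, h, hL, _, _ => by simpa [B1pseq, Hist.last] using hL
  | n + 1, h, hL, ht, hv => by
    obtain ⟨g, x, rfl⟩ := h.exists_eq_snoc
    obtain ⟨ht, hp⟩ := G.transProb_snoc_pos_iff.1 ht
    rw [Hist.visits_snoc, not_or] at hv
    rw [Hist.last_snoc, Hist.sig1_snoc, B1pseq_append_singleton, mem_B1p]
    exact ⟨g.last, last_mem_B1pseq hL ht hv.1, fun hl => hv.1 (Hist.visits_of_last_mem hl),
      x.2.1, hp⟩

theorem exists_hist_of_mem_B1pseq {L : Finset K} (cs : List C) {l : K}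
    (hl : l ∈ G.B1pseq L cs) (hlT : l ∉ G.T) :
    ∃ (n : ℕ) (h : Hist K C D n), h.first ∈ L ∧ h.sig1 = cs ∧ h.last = l ∧
      ¬ h.visits G.T ∧ 0 < G.transProb n h := by
  induction cs using List.reverseRecOn generalizing l with
  | nil =>
    exact ⟨0, ⟨l, Fin.elim0⟩, hl, by simp, rfl, by rwa [Hist.visits_zero], zero_lt_one⟩
  | append_singleton cs c ih =>
    rw [B1pseq_append_singleton, mem_B1p] at hl
    obtain ⟨l', hl', hl'T, d, hp⟩ := hl
    obtain ⟨n, h, hfirst, hsig, hlast, hv, ht⟩ := ih hl' hl'T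
    refine ⟨n + 1, h.snoc (c, d, l), hfirst, by rw [Hist.sig1_snoc, hsig],
      Hist.last_snoc _ _, ?_, ?_⟩
    · rw [Hist.visits_snoc, not_or]
      exact ⟨hv, hlT⟩
    · exact G.transProb_snoc_pos_iff.2 ⟨ht, hlast ▸ hp⟩

variable (𝓛 : Set (Finset K))

/-- A signal `c` with `B1p M c = ∅` cannot occur. -/
def safeActions (M : Finset K) : Finset I :=
  Finset.univ.filter fun i => ∀ c, G.act₁ c = i → G.B1p M c ∈ 𝓛 → G.B1p M c = ∅

def safeStrategy [Nonempty I] (L : Finset K) : Strategy1 I C :=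
  fun cs => uniformD (G.safeActions 𝓛 (G.B1pseq L cs))

theorem safeStrategy_shift [Nonempty I] (L : Finset K) (cs : List C) :
    (fun cs' => G.safeStrategy 𝓛 L (cs ++ cs')) = G.safeStrategy 𝓛 (G.B1pseq L cs) := by
  funext cs'
  simp only [safeStrategy, B1pseq_append]

theorem B1pseq_not_mem_of_safeStrategy [Nonempty I]
    (hsafe : ∀ M : Finset K, M.Nonempty → M ∉ 𝓛 → (G.safeActions 𝓛 M).Nonempty)
    {L : Finset K} (hL : L ∉ 𝓛) :
    ∀ {n : ℕ} {h : Hist K C D n}, h.first ∈ L → 0 < G.transProb n h →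
      0 < actSeqProb G.act₁ (G.safeStrategy 𝓛 L) h.sig1 → ¬ h.visits G.T →
      G.B1pseq L h.sig1 ∉ 𝓛
  | 0, h, _, _, _, _ => by simpa [B1pseq] using hL
  | n + 1, h, hfirst, ht, hw, hv => by
    obtain ⟨g, x, rfl⟩ := h.exists_eq_snoc
    have hlast := G.last_mem_B1pseq hfirst ht hv
    obtain ⟨htg, -⟩ := G.transProb_snoc_pos_iff.1 ht
    rw [Hist.sig1_snoc, actSeqProb_pos_append_singleton_iff] at hw
    rw [Hist.visits_snoc, not_or] at hv
    have hB := B1pseq_not_mem_of_safeStrategy hsafe hL (h := g) hfirst htg hw.1 hv.1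
    have hx : G.act₁ x.1 ∈ G.safeActions 𝓛 (G.B1pseq L g.sig1) :=
      (uniformD_f_pos_iff (hsafe _ ⟨_, G.last_mem_B1pseq (h := g) hfirst htg hv.1⟩ hB) _).1 hw.2
    rw [Hist.sig1_snoc, B1pseq_append_singleton] at hlast ⊢
    intro hmem
    rw [safeActions, Finset.mem_filter] at hx
    rw [hx.2 x.1 rfl hmem] at hlast
    exact Finset.notMem_empty _ hlast

theorem LWin_snoc (L : Finset K) {n : ℕ} {h : Hist K C D n} (x : C × D × K) (hw : G.LWin 𝓛 L h) :
    G.LWin 𝓛 L (h.snoc x) := by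
  obtain ⟨m, hmT, hm⟩ := hw
  refine ⟨m.castSucc, by rwa [Hist.state_snoc_castSucc], fun r hr hrm => ?_⟩
  rw [Fin.val_castSucc] at hrm
  rw [Hist.sig1_snoc, List.take_append_of_le_length (by simp; omega)]
  exact hm r hr hrm

theorem not_LWin_join_snoc (L : Finset K) {a : ℕ} {g : Hist K C D a} (hg : ¬ g.visits G.T) {x : C × D × K}
    (hx : G.B1pseq L (g.sig1 ++ [x.1]) ∈ 𝓛) {N : ℕ} (s : Fin N → C × D × K) :
    ¬ G.LWin 𝓛 L ((g.snoc x).join s) := by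
  rintro ⟨m, hmT, hm⟩
  by_cases hma : (m : ℕ) ≤ a
  · apply hg
    refine ⟨⟨m, by omega⟩, ?_⟩
    have := (g.snoc x).state_join_castLE s (⟨m, by omega⟩ : Fin (a + 1)).castSucc
    rw [Hist.state_snoc_castSucc] at this
    rw [← this]
    exact hmT
  · refine hm (a + 1) (by omega) (by omega) ?_
    rwa [Hist.sig1_join, Hist.sig1_snoc, List.take_left' (by simp)]

def LPositiveWin2 (L : Finset K) (hL : L.Nonempty) : Prop :=
  ∃ τ : Strategy2 J D, ∀ σ : Strategy1 I C, G.Lval 𝓛 L (uniform L hL) σ τ < 1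

/-- After an unsafe action, the fully mixed `τ` drives the belief into `𝓛` before the target with
positive probability. -/
theorem mem_safeActions_of_one_le_Lval {M : Finset K} (hM : M.Nonempty) {σ : Strategy1 I C}
    {τ : Strategy2 J D} (hτ : ∀ ds j, 0 < (τ ds).f j) (hσ : 1 ≤ G.Lval 𝓛 M (uniform M hM) σ τ)
    {cs : List C} (hcs : 0 < actSeqProb G.act₁ σ cs) {i : I} (hi : 0 < (σ cs).f i) :
    i ∈ G.safeActions 𝓛 (G.B1pseq M cs) := by
  by_contra hunsafe
  simp only [safeActions, Finset.mem_filter, Finset.mem_univ, true_and, not_forall] at hunsafe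
  obtain ⟨c, rfl, hin, hne⟩ := hunsafe
  obtain ⟨k, hk⟩ := Finset.nonempty_iff_ne_empty.2 hne
  obtain ⟨l, hl, hlT, d, hp⟩ := G.mem_B1p.1 hk
  obtain ⟨n, g, hfirst, rfl, hlast, hv, ht⟩ := G.exists_hist_of_mem_B1pseq _ hl hlT
  have hpos : 0 < G.playProb (uniform M hM) σ τ (n + 1) (g.snoc (c, d, k)) := by
    rw [playProb_pos_iff, Hist.sig1_snoc, actSeqProb_pos_append_singleton_iff,
      transProb_snoc_pos_iff]
    exact ⟨(uniform_f_pos_iff hM _).2 hfirst, ⟨hcs, hi⟩, actSeqProb_pos_of_forall_pos hτ _,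
      ht, hlast ▸ hp⟩
  have hlose := G.eventProb_le_one_sub_of_join (uniform M hM) σ τ (fun _ => G.LWin 𝓛 M)
    (fun _ _ x => G.LWin_snoc 𝓛 M x) (g.snoc (c, d, k)) fun N s hw =>
      absurd hw (G.not_LWin_join_snoc 𝓛 M hv (by rwa [B1pseq_append_singleton]) s)
  have : G.Lval 𝓛 M (uniform M hM) σ τ ≤ _ := ciSup_le hlose
  linarith

/-- Every play from `k` that is possible under `σ` is possible under `σ'`, hence never visits the
target. -/
theorem eventProb_LWin_le_one_sub_of_reachProb_eq_zero (L : Finset K) (δ : FDist K)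
    (τ : Strategy2 J D) {σ σ' : Strategy1 I C}
    (hsupp : ∀ cs, 0 < actSeqProb G.act₁ σ cs → ∀ i, 0 < (σ cs).f i → 0 < (σ' cs).f i)
    {k : K} (hzero : ∀ n, G.reachProb (dirac k) σ' τ n = 0) (n : ℕ) :
    G.eventProb δ σ τ n (G.LWin 𝓛 L) ≤ 1 - δ.f k := by
  refine G.eventProb_le_one_sub_of_join δ σ τ (fun _ => G.LWin 𝓛 L)
    (fun _ _ x => G.LWin_snoc 𝓛 L x) (⟨k, Fin.elim0⟩ : Hist K C D 0) (fun N s hw => ?_) n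
  by_contra hne
  obtain ⟨-, h₁, h₂, h₃⟩ := (G.playProb_pos_iff _ _ _ _).1
    ((G.playProb_nonneg _ _ _ _).lt_of_ne' hne)
  have hpos : 0 < G.playProb (dirac k) σ' τ (0 + N) (Hist.join ⟨k, Fin.elim0⟩ s) :=
    (G.playProb_pos_iff _ _ _ _).2 ⟨by simp [dirac_f_self],
      actSeqProb_pos_of_support_subset hsupp h₁, h₂, h₃⟩
  obtain ⟨m, hm, -⟩ := hw
  have hreach : G.eventProb (dirac k) σ' τ (0 + N) (·.visits G.T) = 0 := hzero (0 + N)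
  linarith [G.playProb_le_eventProb (dirac k) σ' τ (W := (·.visits G.T)) ⟨m, hm⟩]

variable {G 𝓛}

theorem exists_one_le_Lval (hcl : ∀ L hL, G.LPositiveWin2 𝓛 L hL → L ∈ 𝓛) {M : Finset K}
    (hM : M.Nonempty) (hM𝓛 : M ∉ 𝓛) (τ : Strategy2 J D) :
    ∃ σ : Strategy1 I C, 1 ≤ G.Lval 𝓛 M (uniform M hM) σ τ := by
  by_contra! h
  exact hM𝓛 (hcl M hM ⟨τ, h⟩)

theorem safeActions_nonempty [Nonempty J] (hcl : ∀ L hL, G.LPositiveWin2 𝓛 L hL → L ∈ 𝓛)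
    {M : Finset K} (hM : M.Nonempty) (hM𝓛 : M ∉ 𝓛) : (G.safeActions 𝓛 M).Nonempty := by
  obtain ⟨σ, hσ⟩ := exists_one_le_Lval hcl hM hM𝓛 (randomStrat J D)
  obtain ⟨i, hi⟩ := (σ []).exists_pos
  exact ⟨i, G.mem_safeActions_of_one_le_Lval 𝓛 hM (fun ds j => randomStrat_f_pos ds j) hσ
    (cs := []) (actSeqProb_nil σ ▸ one_pos) hi⟩

theorem exists_reachProb_safeStrategy_pos [Nonempty I] [Nonempty J]
    (hcl : ∀ L hL, G.LPositiveWin2 𝓛 L hL → L ∈ 𝓛) {M : Finset K} (hM𝓛 : M ∉ 𝓛) {k : K}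
    (hk : k ∈ M) (τ : Strategy2 J D) :
    ∃ n, 0 < G.reachProb (dirac k) (G.safeStrategy 𝓛 M) τ n := by
  by_contra! hzero
  have hM : M.Nonempty := ⟨k, hk⟩
  have hτR : ∀ ds j, 0 < (mixStrategy G.act₂ τ (randomStrat J D) ds).f j :=
    mixStrategy_f_pos randomStrat_f_pos τ
  obtain ⟨σ, hσ⟩ := exists_one_le_Lval hcl hM hM𝓛 (mixStrategy G.act₂ τ (randomStrat J D))
  have hsafe : ∀ cs, 0 < actSeqProb G.act₁ σ cs → ∀ i, 0 < (σ cs).f i →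
      0 < (G.safeStrategy 𝓛 M cs).f i := fun cs hcs i hi =>
    have hi' := G.mem_safeActions_of_one_le_Lval 𝓛 hM hτR hσ hcs hi
    (uniformD_f_pos_iff ⟨i, hi'⟩ i).2 hi'
  have hbound : G.Lval 𝓛 M (uniform M hM) σ (mixStrategy G.act₂ τ (randomStrat J D)) ≤
      1 - (M.card : ℝ)⁻¹ / 2 := ciSup_le fun n => by
    show G.eventProb _ _ _ n _ ≤ _
    have hk' : (uniform M hM).f k = (M.card : ℝ)⁻¹ := if_pos hk
    linarith [eventProb_mixStrategy G (uniform M hM) σ τ (randomStrat J D) (G.LWin 𝓛 M (n := n)),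
      G.eventProb_LWin_le_one_sub_of_reachProb_eq_zero 𝓛 M (uniform M hM) τ hsafe
        (fun n => (hzero n).antisymm (G.eventProb_nonneg _ _ _ _)) n,
      G.eventProb_le_one (uniform M hM) σ (randomStrat J D) (G.LWin 𝓛 M (n := n))]
  have : (0 : ℝ) < (M.card : ℝ)⁻¹ := by simpa using hM.card_pos
  linarith

theorem exists_uniform_reachProb_safeStrategy [Nonempty K] [Nonempty I] [Nonempty J]
    (hcl : ∀ L hL, G.LPositiveWin2 𝓛 L hL → L ∈ 𝓛) :
    ∃ N, ∃ ρ > 0, ∀ M ∉ 𝓛, ∀ k ∈ M, ∀ τ : Strategy2 J D,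
      ρ ≤ G.reachProb (dirac k) (G.safeStrategy 𝓛 M) τ N := by
  have hpair : ∀ p : Finset K × K, ∃ N, ∃ ρ > 0, p.1 ∉ 𝓛 → p.2 ∈ p.1 →
      ∀ τ : Strategy2 J D, ρ ≤ G.reachProb (dirac p.2) (G.safeStrategy 𝓛 p.1) τ N := by
    rintro ⟨M, k⟩
    by_cases hMk : M ∉ 𝓛 ∧ k ∈ M
    · obtain ⟨N, ρ, hρ, h⟩ := exists_pos_le_of_compactSpace
        (fun n => G.continuous_eventProb _ _ (n := n) _)
        (fun τ => G.reachProb_mono _ _ τ) (exists_reachProb_safeStrategy_pos hcl hMk.1 hMk.2)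
      exact ⟨N, ρ, hρ, fun _ _ => h⟩
    · exact ⟨0, 1, one_pos, fun hM hk => absurd ⟨hM, hk⟩ hMk⟩
  choose N ρ hρ h using hpair
  refine ⟨Finset.univ.sup N, Finset.univ.inf' Finset.univ_nonempty ρ,
    (Finset.lt_inf'_iff _).2 fun p _ => hρ p, fun M hM k hk τ => ?_⟩
  calc Finset.univ.inf' Finset.univ_nonempty ρ ≤ ρ (M, k) := Finset.inf'_le _ (Finset.mem_univ _)
    _ ≤ G.reachProb (dirac k) (G.safeStrategy 𝓛 M) τ (N (M, k)) := h (M, k) hM hk τ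
    _ ≤ _ := G.reachProb_mono _ _ _ (Finset.le_sup (Finset.mem_univ _))

theorem val_safeStrategy_eq_one [Nonempty K] [Nonempty I] [Nonempty J]
    (hcl : ∀ L hL, G.LPositiveWin2 𝓛 L hL → L ∈ 𝓛) {L : Finset K} (hL : L.Nonempty)
    (hL𝓛 : L ∉ 𝓛) (τ : Strategy2 J D) :
    G.val (uniform L hL) (G.safeStrategy 𝓛 L) τ = 1 := by
  obtain ⟨N, ρ, hρ, hreach⟩ := exists_uniform_reachProb_safeStrategy hcl
  obtain ⟨k, hk⟩ := id hL
  have hρ1 : ρ ≤ 1 := (hreach L hL𝓛 k hk τ).trans (G.eventProb_le_one _ _ _ _)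
  have hstep : ∀ a, G.eventProb (uniform L hL) (G.safeStrategy 𝓛 L) τ (a + N) (¬ ·.visits G.T) ≤
      (1 - ρ) * G.eventProb (uniform L hL) (G.safeStrategy 𝓛 L) τ a (¬ ·.visits G.T) := fun a =>
    G.eventProb_not_visits_add_le _ _ _ fun h hp hv => by
      obtain ⟨hfirst, hw, -, ht⟩ := (G.playProb_pos_iff _ _ _ _).1 hp
      rw [uniform_f_pos_iff] at hfirst
      rw [safeStrategy_shift]
      exact hreach _ (G.B1pseq_not_mem_of_safeStrategy 𝓛
        (fun M hM hM𝓛 => safeActions_nonempty hcl hM hM𝓛) hL𝓛 hfirst ht hw hv) _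
        (G.last_mem_B1pseq hfirst ht hv) _
  exact G.val_eq_one_of_eventProb_not_visits_add_le _ _ _ hρ hρ1 hstep

end Game

variable {K I J C D : Type*} [Fintype K] [Fintype I] [Fintype J] [Fintype C] [Fintype D]
  [Nonempty K] [Nonempty I] [Nonempty J] [Nonempty C] [Nonempty D]

theorem Lgame_no_new_positive2_implies_almostsure1_general (G : Game K I J C D)
    (𝓛 : Set (Finset K))
    (hclosed : ∀ (L : Finset K) (hL : L.Nonempty),
      (∃ τ, ∀ σ, G.Lval 𝓛 L (uniform L hL) σ τ < 1) → L ∈ 𝓛) :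
    ∀ (L : Finset K) (hL : L.Nonempty), L ∉ 𝓛 →
      G.AlmostSureWin1 (uniform L hL) :=
  fun _ hL hL𝓛 => ⟨G.safeStrategy 𝓛 _, Game.val_safeStrategy_eq_one hclosed hL hL𝓛⟩

/-- if `𝓛` is upward-closed, every support in `𝓛` is positively
winning for player 2 in the original game, and every support positively winning
for player 2 in the `𝓛`-game already belongs to `𝓛`, then every support outside
`𝓛` is almost-surely winning for player 1 in the original game. -/
theorem Lgame_no_new_positive2_implies_almostsure1 (G : Game K I J C D)
    (𝓛 : Set (Finset K))
    (hup : ∀ L ∈ 𝓛, ∀ L' : Finset K, L ⊆ L' → L' ∈ 𝓛)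
    (hpos : ∀ L ∈ 𝓛, ∀ hL : L.Nonempty, G.PositiveWin2 (uniform L hL))
    (hclosed : ∀ (L : Finset K) (hL : L.Nonempty),
      (∃ τ, ∀ σ, G.Lval 𝓛 L (uniform L hL) σ τ < 1) → L ∈ 𝓛) :
    ∀ (L : Finset K) (hL : L.Nonempty), L ∉ 𝓛 →
      G.AlmostSureWin1 (uniform L hL) :=
  Lgame_no_new_positive2_implies_almostsure1_general G 𝓛 hclosed
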